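/- Let F be a divisible P-category fulfilling the Alperin condition. If F̂ is a divisible P-category such that F̂(P,U) ⊇ F(P,U) for every subgroup U of P which is F-essential or equal to P, then F̂ contains F, i.e. F(Q,R) ⊆ F̂(Q,R) for all subgroups Q and R of P. -/

import Mathlib

namespace Puig

variable {G : Type*} [Group G]

/-- The conjugation morphism `x ↦ u x u⁻¹` from `R` to `Q`. -/
def conjMap {Q R : Subgroup G} (u : G) (h : ∀ x ∈ R, u * x * u⁻¹ ∈ Q) : ↥R →* ↥Q where
  toFun x := ⟨u * x * u⁻¹, h x x.2⟩
  map_one' := by ext; simp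
  map_mul' x y := by ext; simp

/-- The data of a `P`-category: a set of morphisms for each pair of subgroups. -/
structure PCat (G : Type*) [Group G] where
  Hom : ∀ _Q _R : Subgroup G, Set (↥_R →* ↥_Q)

/-- `F` is a divisible `P`-category. -/
structure PCat.IsDivisible (F : PCat G) : Prop where
  inj : ∀ ⦃Q R : Subgroup G⦄ ⦃φ : ↥R →* ↥Q⦄, φ ∈ F.Hom Q R → Function.Injective φ
  conj_mem : ∀ ⦃Q R : Subgroup G⦄ (u : G) (h : ∀ x ∈ R, u * x * u⁻¹ ∈ Q),
    conjMap u h ∈ F.Hom Q R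
  comp_mem : ∀ ⦃Q R T : Subgroup G⦄ ⦃φ : ↥R →* ↥Q⦄ ⦃ψ : ↥T →* ↥R⦄,
    φ ∈ F.Hom Q R → ψ ∈ F.Hom R T → φ.comp ψ ∈ F.Hom Q T
  div : ∀ ⦃Q R T : Subgroup G⦄ ⦃φ : ↥R →* ↥Q⦄ (ψ : ↥T →* ↥R), φ ∈ F.Hom Q R →
    (φ.comp ψ ∈ F.Hom Q T ↔ ψ ∈ F.Hom R T)

/-- The image `φ(Q) ≤ G` of a morphism `φ : Q → R` between subgroups of `G`. -/
def img {Q R : Subgroup G} (φ : ↥Q →* ↥R) : Subgroup G := φ.range.map R.subtype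

/-- The corestriction `Q → φ(Q)` of a morphism `φ`. -/
def toImg {Q R : Subgroup G} (φ : ↥Q →* ↥R) : ↥Q →* ↥(img φ) where
  toFun x := ⟨(φ x : G), Subgroup.mem_map_of_mem R.subtype ⟨x, rfl⟩⟩
  map_one' := by ext; simp
  map_mul' x y := by ext; simp

/-- Restriction of a morphism along an inclusion of subgroups. -/
def restrHom {A B C : Subgroup G} (ψ : ↥A →* ↥C) (h : B ≤ A) : ↥B →* ↥C :=
  ψ.comp (Subgroup.inclusion h)

/-- The inclusion morphism `ι_A^P : A → P`. -/
def inclP (A : Subgroup G) : ↥A →* ↥(⊤ : Subgroup G) := Subgroup.inclusion le_top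

/-- The automorphism of `Q` induced by conjugation by `u ∈ N_G(Q)`. -/
def conjAut (Q : Subgroup G) (u : ↥(Subgroup.normalizer (Q : Set G))) : MulAut ↥Q where
  toFun x := ⟨(u : G) * x * (u : G)⁻¹, (Subgroup.mem_normalizer_iff.mp u.2 x).mp x.2⟩
  invFun x := ⟨(u : G)⁻¹ * x * (u : G),
    (Subgroup.mem_normalizer_iff.mp u.2 ((u : G)⁻¹ * x * (u : G))).mpr
      (by simpa [mul_assoc] using x.2)⟩
  left_inv x := by ext; simp [mul_assoc]
  right_inv x := by ext; simp [mul_assoc]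
  map_mul' x y := by ext; simp

/-- The homomorphism `N_G(Q) → Aut(Q)` given by conjugation. -/
def conjHomN (Q : Subgroup G) : ↥(Subgroup.normalizer (Q : Set G)) →* MulAut ↥Q where
  toFun := conjAut Q
  map_one' := by ext x; simp [conjAut]
  map_mul' u v := by ext x; simp [conjAut, mul_assoc]

/-- `F_R(Q)`: the group of automorphisms of `Q` induced by conjugation by elements of `R`. -/
def conjF (R Q : Subgroup G) : Subgroup (MulAut ↥Q) :=
  (R.subgroupOf (Subgroup.normalizer (Q : Set G))).map (conjHomN Q)

/-- `F(Q)`: the group of `F`-automorphisms of `Q`. -/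
def FAut (F : PCat G) (Q : Subgroup G) : Subgroup (MulAut ↥Q) :=
  Subgroup.closure {α : MulAut ↥Q | α.toMonoidHom ∈ F.Hom Q Q}

/-- `O_p(G)`: the largest normal `p`-subgroup of `G`. -/
def pCore (p : ℕ) (G : Type*) [Group G] : Subgroup G :=
  sSup {H : Subgroup G | H.Normal ∧ IsPGroup p ↥H}

/-- `N_P^K(Q)`. -/
def NPK (Q : Subgroup G) (K : Subgroup (MulAut ↥Q)) : Subgroup G :=
  (K.comap (conjHomN Q)).map (Subgroup.normalizer (Q : Set G)).subtype

/-- `^φK`: the image of `K ≤ Aut Q` in `Aut (φ(Q))` under the isomorphism induced by `φ`. -/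
def pushK {Q R : Subgroup G} (φ : ↥Q →* ↥R) (K : Subgroup (MulAut ↥Q)) :
    Subgroup (MulAut ↥(img φ)) :=
  Subgroup.closure {β | ∃ α ∈ K, ∀ x : ↥Q, β (toImg φ x) = toImg φ (α x)}

/-- `φ*K'`: the pull-back of `K' ≤ Aut (φ(Q))` to `Aut Q` under the isomorphism induced by `φ`. -/
def pullK {Q R : Subgroup G} (φ : ↥Q →* ↥R) (K' : Subgroup (MulAut ↥(img φ))) :
    Subgroup (MulAut ↥Q) :=
  Subgroup.closure {α | ∃ β ∈ K', ∀ x : ↥Q, toImg φ (α x) = β (toImg φ x)}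

/-- `Q` is fully `K`-normalized in `F`. -/
def FullyKNormalized (F : PCat G) (Q : Subgroup G) (K : Subgroup (MulAut ↥Q)) : Prop :=
  ∀ ψ ∈ F.Hom ⊤ (Q ⊔ NPK Q K),
    img (restrHom ψ le_sup_right) =
      NPK (img (restrHom ψ le_sup_left)) (pushK (restrHom ψ le_sup_left) K)

/-- The triple `(Q, K, φ)` is extensile in `F`. -/
def Extensile (F : PCat G) (Q : Subgroup G) (K : Subgroup (MulAut ↥Q))
    (φ : ↥Q →* ↥(⊤ : Subgroup G)) : Prop :=
  ∃ ψ ∈ F.Hom ⊤ (Q ⊔ NPK Q K), ∃ χ : MulAut ↥Q, χ ∈ K ∧ χ.toMonoidHom ∈ F.Hom Q Q ∧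
    ∀ u : ↥Q, restrHom ψ le_sup_left u = φ (χ u)

/-- The Sylow condition: `F_P(P)` is a Sylow `p`-subgroup of `F(P)`. -/
def SylowCond (p : ℕ) (F : PCat G) : Prop :=
  ∃ S : Sylow p ↥(FAut F (⊤ : Subgroup G)),
    (S : Subgroup ↥(FAut F (⊤ : Subgroup G))) =
      (conjF (⊤ : Subgroup G) (⊤ : Subgroup G)).subgroupOf (FAut F (⊤ : Subgroup G))

/-- The extension condition for a Frobenius `P`-category. -/
def ExtensionCond (F : PCat G) : Prop :=
  ∀ (Q : Subgroup G) (K : Subgroup (MulAut ↥Q)) (φ : ↥Q →* ↥(⊤ : Subgroup G)),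
    φ ∈ F.Hom ⊤ Q → FullyKNormalized F (img φ) (pushK φ K) → Extensile F Q K φ

/-- `F` is a Frobenius `P`-category. -/
def IsFrobenius (p : ℕ) (F : PCat G) : Prop :=
  F.IsDivisible ∧ SylowCond p F ∧ ExtensionCond F

/-- The free ℤ-module on all morphisms from `R` to `Q`. -/
abbrev Zmod (Q R : Subgroup G) : Type _ := (↥R →* ↥Q) →₀ ℤ

/-- Bilinear composition on the free ℤ-modules of morphisms. -/
noncomputable def dcomp {Q R T : Subgroup G} (a : Zmod Q R) (b : Zmod R T) : Zmod Q T :=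
  a.sum fun φ m => b.sum fun ψ n => Finsupp.single (φ.comp ψ) (m * n)

/-- `ℤF(Q,R)`: the free ℤ-module with basis `F(Q,R)`. -/
noncomputable def ZF (F : PCat G) (Q R : Subgroup G) : Submodule ℤ (Zmod Q R) :=
  Finsupp.supported ℤ ℤ (F.Hom Q R)

/-- `w_F(Q)`: the kernel of the augmentation `ℤF(P,Q) → ℤ`. -/
noncomputable def wF (F : PCat G) (Q : Subgroup G) : Submodule ℤ (Zmod (⊤ : Subgroup G) Q) :=
  ZF F ⊤ Q ⊓ LinearMap.ker (Finsupp.linearCombination ℤ fun _ => (1 : ℤ))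

/-- `r_F(Q) = w_F(P)∘ℤF(P,Q) + Σ_{|R|>|Q|} w_F(R)∘ℤF(R,Q)`. -/
noncomputable def rF (F : PCat G) (Q : Subgroup G) : Submodule ℤ (Zmod (⊤ : Subgroup G) Q) :=
  Submodule.span ℤ {x | ∃ R : Subgroup G, (R = ⊤ ∨ Nat.card ↥Q < Nat.card ↥R) ∧
    ∃ a ∈ wF F R, ∃ b ∈ ZF F R Q, x = dcomp a b}

/-- `Q` is `F`-essential. -/
def IsEssential (F : PCat G) (Q : Subgroup G) : Prop := rF F Q ≠ wF F Q

/-- `Q` is `F`-selfcentralizing. -/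
def SelfCentralizing (F : PCat G) (Q : Subgroup G) : Prop :=
  ∀ φ ∈ F.Hom (⊤ : Subgroup G) Q,
    Subgroup.centralizer (img φ : Set G) = (Subgroup.center ↥(img φ)).map (img φ).subtype

/-- `Q` is `F`-radical. -/
def Radical (p : ℕ) (F : PCat G) (Q : Subgroup G) : Prop :=
  SelfCentralizing F Q ∧ (pCore p ↥(FAut F Q)).map (FAut F Q).subtype = conjF Q Q

/-- `Q` is `F`-intersected. -/
def Intersected (F : PCat G) (Q : Subgroup G) : Prop :=
  SelfCentralizing F Q ∧
    conjF Q Q = ⨅ φ : ↥(F.Hom (⊤ : Subgroup G) Q), pullK φ.1 (conjF ⊤ (img φ.1))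

/-- The Alperin condition on `F`. -/
def AlperinCond (p : ℕ) (F : PCat G) : Prop :=
  ∀ Q : Subgroup G, IsEssential F Q → Radical p F Q ∧
    ∀ φ ∈ F.Hom (⊤ : Subgroup G) Q, ∀ φ' ∈ F.Hom (⊤ : Subgroup G) Q,
      ∃ σ ∈ F.Hom Q Q,
        Finsupp.single φ' (1 : ℤ) - Finsupp.single (φ.comp σ) 1 ∈ rF F Q

/-- The subgroup of `G` corresponding to a subgroup of a subgroup `N ≤ G`. -/
def liftSub {N : Subgroup G} (A : Subgroup ↥N) : Subgroup G := A.map N.subtype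

/-- The category `N_F^K(Q)` over the group `N_P^K(Q)`. -/
def NFK (F : PCat G) (Q : Subgroup G) (K : Subgroup (MulAut ↥Q)) : PCat ↥(NPK Q K) where
  Hom A B := {φ : ↥B →* ↥A | ∃ ψ ∈ F.Hom (Q ⊔ liftSub A) (Q ⊔ liftSub B), ∃ χ ∈ K,
    (∀ (x : G) (hxQ : x ∈ Q) (hx : x ∈ Q ⊔ liftSub B),
      ((ψ ⟨x, hx⟩ : ↥(Q ⊔ liftSub A)) : G) = ((χ ⟨x, hxQ⟩ : ↥Q) : G)) ∧
    (∀ (y : ↥B) (hy : ((y : ↥(NPK Q K)) : G) ∈ Q ⊔ liftSub B),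
      ((ψ ⟨((y : ↥(NPK Q K)) : G), hy⟩ : ↥(Q ⊔ liftSub A)) : G) =
        (((φ y : ↥A) : ↥(NPK Q K)) : G))}

/-- A generator family for `w_F`. -/
def GenFamily (F : PCat G) (S : ∀ Q : Subgroup G, Set (Zmod (⊤ : Subgroup G) Q)) : Prop :=
  (∀ Q : Subgroup G, Q ≠ ⊤ → S Q ⊆ (wF F Q : Set (Zmod (⊤ : Subgroup G) Q))) ∧
  ∀ Q : Subgroup G, Q ≠ ⊤ →
    wF F Q = Submodule.span ℤ {x | ∃ R : Subgroup G, R ≠ ⊤ ∧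
      ∃ a ∈ S R, ∃ φ ∈ F.Hom R Q, x = dcomp a (Finsupp.single φ (1 : ℤ))}

/-- `F^𝔛` is a partial Frobenius `P`-category. -/
def PartialFrobenius (p : ℕ) (F : PCat G) (X : Set (Subgroup G)) : Prop :=
  SylowCond p F ∧ ∀ Q ∈ X, ∀ (K : Subgroup (MulAut ↥Q)) (φ : ↥Q →* ↥(⊤ : Subgroup G)),
    φ ∈ F.Hom ⊤ Q → FullyKNormalized F (img φ) (pushK φ K) → Extensile F Q K φ

/-- The closure condition on the set of subgroups `𝔛`. -/
def XClosed (F : PCat G) (X : Set (Subgroup G)) : Prop :=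
  X.Nonempty ∧ ∀ Q : Subgroup G, (∃ R ∈ X, (F.Hom Q R).Nonempty) → Q ∈ X

/-! For a non-essential `Q` we have `r_F(Q) = w_F(Q)`, so `φ - ι_Q^P ∈ r_F(Q)` for every
`φ ∈ F(P,Q)`. The linear form `homCount F̂` counting `F̂`-morphisms vanishes on `r_F(Q)` once
`F̂(P,R) ⊇ F(P,R)` for `R = P` and for all `R` larger than `Q`: divisibility of `F̂` makes it
factor through the augmentation of the left factor of a composite, and `w_F(R)` has augmentation
zero. Since it is `1` on `ι_Q^P`, it is `1` on `φ`, i.e. `φ ∈ F̂(P,Q)`. Descending induction on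
`|Q|` gives `F(P,Q) ⊆ F̂(P,Q)` for all `Q`, and divisibility reduces `F(Q,R)` to `F(P,R)`. -/

namespace PCat

variable {F Fh : PCat G}

theorem IsDivisible.inclP_mem (hF : F.IsDivisible) (Q : Subgroup G) : inclP Q ∈ F.Hom ⊤ Q := by
  convert hF.conj_mem (Q := ⊤) (R := Q) 1 fun _ _ => trivial
  ext
  simp [inclP, conjMap]

theorem IsDivisible.hom_subset_of_hom_top_subset (hF : F.IsDivisible) (hFh : Fh.IsDivisible)
    (htop : ∀ R : Subgroup G, F.Hom ⊤ R ⊆ Fh.Hom ⊤ R) (Q R : Subgroup G) :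
    F.Hom Q R ⊆ Fh.Hom Q R := fun φ hφ =>
  (hFh.div φ (hFh.inclP_mem Q)).mp (htop R (hF.comp_mem (hF.inclP_mem Q) hφ))

noncomputable def homCount (F : PCat G) (Q R : Subgroup G) : Zmod Q R →ₗ[ℤ] ℤ :=
  Finsupp.linearCombination ℤ ((F.Hom Q R).indicator 1)

theorem homCount_single (Q R : Subgroup G) (φ : ↥R →* ↥Q) :
    homCount F Q R (Finsupp.single φ 1) = (F.Hom Q R).indicator 1 φ := by
  simp [homCount]

theorem IsDivisible.indicator_comp (hF : F.IsDivisible) {Q R T : Subgroup G} {φ : ↥R →* ↥Q}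
    (hφ : φ ∈ F.Hom Q R) (ψ : ↥T →* ↥R) :
    (F.Hom Q T).indicator (1 : (↥T →* ↥Q) → ℤ) (φ.comp ψ) = (F.Hom R T).indicator 1 ψ := by
  by_cases hψ : ψ ∈ F.Hom R T
  · rw [Set.indicator_of_mem hψ, Set.indicator_of_mem ((hF.div ψ hφ).mpr hψ)]
    rfl
  · rw [Set.indicator_of_notMem hψ, Set.indicator_of_notMem fun h => hψ ((hF.div ψ hφ).mp h)]

theorem IsDivisible.homCount_dcomp (hF : F.IsDivisible) {Q R T : Subgroup G} {a : Zmod Q R}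
    (ha : a ∈ ZF F Q R) (b : Zmod R T) :
    homCount F Q T (dcomp a b) =
      Finsupp.linearCombination ℤ (fun _ => (1 : ℤ)) a * homCount F R T b := by
  rw [dcomp, map_finsuppSum, Finsupp.linearCombination_apply, Finsupp.sum_mul]
  refine Finsupp.sum_congr fun φ hφ => ?_
  rw [map_finsuppSum, homCount, homCount, Finsupp.linearCombination_apply, smul_eq_mul, mul_one,
    Finsupp.mul_sum]
  refine Finsupp.sum_congr fun ψ _ => ?_
  rw [Finsupp.linearCombination_single, smul_eq_mul, smul_eq_mul,
    hF.indicator_comp ((Finsupp.mem_supported ℤ a).mp ha hφ), mul_assoc]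

theorem IsDivisible.rF_le_ker_homCount (hFh : Fh.IsDivisible) {Q : Subgroup G}
    (hlarger : ∀ R : Subgroup G, (R = ⊤ ∨ Nat.card Q < Nat.card R) → F.Hom ⊤ R ⊆ Fh.Hom ⊤ R) :
    rF F Q ≤ LinearMap.ker (homCount Fh ⊤ Q) := by
  rw [rF, Submodule.span_le]
  rintro _ ⟨R, hR, a, ⟨haF, haug⟩, b, -, rfl⟩
  have haFh : a ∈ ZF Fh ⊤ R := Finsupp.supported_mono (hlarger R hR) haF
  rw [SetLike.mem_coe, LinearMap.mem_ker] at haug ⊢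
  rw [hFh.homCount_dcomp haFh, haug, zero_mul]

theorem IsDivisible.hom_top_subset_of_rF_eq_wF (hF : F.IsDivisible) (hFh : Fh.IsDivisible)
    {Q : Subgroup G} (hQ : rF F Q = wF F Q)
    (hlarger : ∀ R : Subgroup G, (R = ⊤ ∨ Nat.card Q < Nat.card R) → F.Hom ⊤ R ⊆ Fh.Hom ⊤ R) :
    F.Hom ⊤ Q ⊆ Fh.Hom ⊤ Q := by
  intro φ hφ
  have hdiff : Finsupp.single φ 1 - Finsupp.single (inclP Q) 1 ∈ wF F Q :=
    ⟨sub_mem (Finsupp.single_mem_supported ℤ 1 hφ)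
      (Finsupp.single_mem_supported ℤ 1 (hF.inclP_mem Q)), by simp⟩
  have hcount := hFh.rF_le_ker_homCount hlarger (hQ ▸ hdiff)
  rw [LinearMap.mem_ker, map_sub, homCount_single, homCount_single,
    Set.indicator_of_mem (hFh.inclP_mem Q), sub_eq_zero] at hcount
  by_contra hφh
  simp [Set.indicator_of_notMem hφh] at hcount

theorem IsDivisible.hom_top_subset [Finite G] (hF : F.IsDivisible) (hFh : Fh.IsDivisible)
    (hsub : ∀ U : Subgroup G, (IsEssential F U ∨ U = ⊤) → F.Hom ⊤ U ⊆ Fh.Hom ⊤ U)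
    (Q : Subgroup G) : F.Hom ⊤ Q ⊆ Fh.Hom ⊤ Q := by
  induction hn : Nat.card G - Nat.card Q using Nat.strong_induction_on generalizing Q with
  | _ n ih =>
  by_cases hess : IsEssential F Q
  · exact hsub Q (.inl hess)
  refine hF.hom_top_subset_of_rF_eq_wF hFh (not_not.mp hess) fun R hR => ?_
  rcases hR with rfl | hlt
  · exact hsub ⊤ (.inr rfl)
  · have hR : Nat.card R ≤ Nat.card G := Nat.card_le_card_of_injective _ R.subtype_injective
    exact ih _ (by omega) R rfl

end PCat

theorem alperin_generation_general
    {P : Type*} [Group P] [Finite P]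
    (F : PCat P) (hF : F.IsDivisible)
    (Fh : PCat P) (hFh : Fh.IsDivisible)
    (hsub : ∀ U : Subgroup P, (IsEssential F U ∨ U = ⊤) → F.Hom ⊤ U ⊆ Fh.Hom ⊤ U) :
    ∀ Q R : Subgroup P, F.Hom Q R ⊆ Fh.Hom Q R :=
  hF.hom_subset_of_hom_top_subset hFh (hF.hom_top_subset hFh hsub)

/-- **3.13**: if `F` fulfills the Alperin condition, any divisible `P`-category `F̂` with
`F̂(P,U) ⊇ F(P,U)` for every `U` which is `F`-essential or equal to `P` contains `F`. -/
theorem alperin_generation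
    (p : ℕ) [Fact p.Prime] {P : Type*} [Group P] [Finite P] (hP : IsPGroup p P)
    (F : PCat P) (hF : F.IsDivisible) (hA : AlperinCond p F)
    (Fh : PCat P) (hFh : Fh.IsDivisible)
    (hsub : ∀ U : Subgroup P, (IsEssential F U ∨ U = ⊤) → F.Hom ⊤ U ⊆ Fh.Hom ⊤ U) :
    ∀ Q R : Subgroup P, F.Hom Q R ⊆ Fh.Hom Q R :=
  alperin_generation_general F hF Fh hFh hsub

end Puig
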